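/- arXiv:1508.03154 — 2 statements merged into one kernel-verified Lean document; each statement's English description precedes it below -/
import Mathlib

section
/- Suppose f is irreducible in ℤ[u^{±1}] and noncyclotomic. Then a bounded integer sequence v ∈ ℓ^∞(ℤ,ℤ) lies in V_f if and only if for every complex root θ of f with |θ| = 1 one has sup_{m,n ≥ 0} |Σ_{k=−m}^{n} v_k θ^k| < ∞. In particular, V_f contains ℓ^1(ℤ,ℤ) (the finitely-supported-sum integrable sequences) and every periodic element of ℓ^∞(ℤ,ℤ). -/
open Filter Topology Polynomial

noncomputable section

/-- `f(σ̄)` on real sequences. -/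
def fsR (f : Polynomial ℤ) (w : ℤ → ℝ) : ℤ → ℝ :=
  fun n => ∑ k ∈ Finset.range (f.natDegree + 1), (f.coeff k : ℝ) * w (n + (k : ℤ))

/-- Bounded real sequences. -/
def Bdd (w : ℤ → ℝ) : Prop := ∃ B : ℝ, ∀ n, |w n| ≤ B

/-- Bounded integer sequences. -/
def BddZ (v : ℤ → ℤ) : Prop := ∃ B : ℤ, ∀ n, |v n| ≤ B

/-- The sequence `v^Δ`. -/
def vDelta : ℤ → ℝ := fun n => if n = 0 then 1 else 0

/-- `f` is noncyclotomic. -/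
def Noncyclotomic (f : Polynomial ℤ) : Prop :=
  ∀ θ : ℂ, Polynomial.aeval θ f = 0 → ∀ n : ℕ, 0 < n → θ ^ n ≠ 1

/-- `w⁺`. -/
def IsWplus (f : Polynomial ℤ) (w : ℤ → ℝ) : Prop :=
  Bdd w ∧ fsR f w = vDelta ∧ Tendsto w atTop (nhds 0)

/-- `w⁻`. -/
def IsWminus (f : Polynomial ℤ) (w : ℤ → ℝ) : Prop :=
  Bdd w ∧ fsR f w = vDelta ∧ Tendsto w atBot (nhds 0)

/-- `ξ̄*(v)_k = ∑_{n≥0} v_n w⁻_{k-n} + ∑_{n<0} v_n w⁺_{k-n}`. -/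
def xiStar (wp wm : ℤ → ℝ) (v : ℤ → ℤ) : ℤ → ℝ :=
  fun k => ∑' n : ℤ, (v n : ℝ) * (if 0 ≤ n then wm (k - n) else wp (k - n))

/-- Membership in `W_f = f(σ̄)^{-1}(ℓ^∞(ℤ,ℤ)) ⊆ ℓ^∞(ℤ,ℝ)`. -/
def InWf (f : Polynomial ℤ) (w : ℤ → ℝ) : Prop :=
  Bdd w ∧ ∀ n, ∃ z : ℤ, fsR f w n = (z : ℝ)

/-- Membership in `V_f = f(σ̄)(W_f)` for an integer sequence. -/
def InVf (f : Polynomial ℤ) (v : ℤ → ℤ) : Prop :=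
  ∃ w : ℤ → ℝ, Bdd w ∧ ∀ n, fsR f w n = (v n : ℝ)


/-!
Over `ℂ`, `f(σ̄) = c ∏ (σ̄ - θ)` over the roots `θ` of `f`, which are simple because `f` is
irreducible. The equation `u(n+1) - θ u(n) = v(n)` has a bounded solution `u` for bounded `v`:
by a geometric series if `|θ| ≠ 1`, and by the partial sums of `v_k θ^{-k}` if `|θ| = 1`
(this is where their boundedness is needed). If `μ ≠ θ⁻¹` lies on the unit circle, summing
`μ^{n+1}` times the equation shows that bounded `μ`-twisted partial sums of `v` pass to `u`.
Roots on the unit circle come in pairs `θ, θ⁻¹ = θ̄`, so the factors of `f(σ̄)` can be inverted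
one at a time. Conversely, if `v = f(σ̄) w` with `w` bounded then `v = (σ̄ - θ⁻¹) y` with `y`
bounded, and the `θ`-twisted sums of `v` telescope. Sequences in `ℓ¹` trivially have bounded
twisted sums, and so do `p`-periodic ones, since `θ^p ≠ 1` for noncyclotomic `f`.
-/

open Finset

section PartialSums

variable {M : Type*} [AddCommGroup M]

theorem Int.sum_Icc_succ_top {a b : ℤ} (h : a ≤ b + 1) (g : ℤ → M) :
    ∑ k ∈ Icc a (b + 1), g k = ∑ k ∈ Icc a b, g k + g (b + 1) := by
  rw [← insert_Icc_right_eq_Icc_add_one h, sum_insert (by simp), add_comm]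

theorem Int.sum_Icc_sub_telescope (Y : ℤ → M) {a b : ℤ} (h : a ≤ b + 1) :
    ∑ k ∈ Icc a b, (Y (k + 1) - Y k) = Y (b + 1) - Y a := by
  induction b, (show a - 1 ≤ b by omega) using Int.leInduction with
  | base => simp
  | succ b hb ih => rw [Int.sum_Icc_succ_top (by omega), ih (by omega)]; abel

def partialSum (g : ℤ → M) (n : ℤ) : M :=
  if 0 ≤ n then ∑ k ∈ Icc 0 n, g k else -∑ k ∈ Icc (n + 1) (-1), g k

theorem partialSum_sub_partialSum_sub_one (g : ℤ → M) (n : ℤ) :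
    partialSum g n - partialSum g (n - 1) = g n := by
  unfold partialSum
  rcases lt_trichotomy n 0 with hn | rfl | hn
  · rw [if_neg hn.not_ge, if_neg (by omega), sub_add_cancel n 1,
      ← insert_Icc_add_one_left_eq_Icc (show n ≤ -1 by omega), sum_insert (by simp)]
    abel
  · simp
  · rw [if_pos hn.le, if_pos (by omega)]
    obtain ⟨m, rfl⟩ : ∃ m, n = m + 1 := ⟨n - 1, by ring⟩
    rw [add_sub_cancel_right, Int.sum_Icc_succ_top (by omega), add_sub_cancel_left]

theorem sum_Icc_eq_partialSum_sub (g : ℤ → M) {a b : ℤ} (h : a ≤ b + 1) :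
    ∑ k ∈ Icc a b, g k = partialSum g b - partialSum g (a - 1) := by
  have := Int.sum_Icc_sub_telescope (fun k => partialSum g (k - 1)) h
  simpa [partialSum_sub_partialSum_sub_one] using this

end PartialSums

section Bounded

variable {E : Type*} [SeminormedAddCommGroup E]

def BddSeq (u : ℤ → E) : Prop := ∃ B, ∀ n, ‖u n‖ ≤ B

def BddSums (g : ℤ → E) : Prop := ∃ C, ∀ a b : ℤ, a ≤ b → ‖∑ k ∈ Icc a b, g k‖ ≤ C

theorem bddSeq_partialSum_of_bound {g : ℤ → E} {C : ℝ}
    (h : ∀ m n : ℕ, ‖∑ k ∈ Icc (-(m : ℤ)) n, g k‖ ≤ C) : BddSeq (partialSum g) := by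
  have hg0 : ‖g 0‖ ≤ C := by simpa using h 0 0
  refine ⟨C + C, fun n => ?_⟩
  unfold partialSum
  split_ifs with hn
  · have := h 0 n.toNat
    rw [Nat.cast_zero, neg_zero, Int.toNat_of_nonneg hn] at this
    linarith [norm_nonneg (g 0)]
  · have hsplit := Int.sum_Icc_succ_top (show n + 1 ≤ -1 + 1 by omega) g
    rw [show (-1 : ℤ) + 1 = 0 by rfl] at hsplit
    rw [norm_neg, eq_sub_of_add_eq hsplit.symm]
    have := h (-(n + 1)).toNat 0
    rw [Int.toNat_of_nonneg (by omega), neg_neg] at this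
    exact (norm_sub_le _ _).trans (add_le_add (by simpa using this) hg0)

theorem BddSums.of_bddSeq_partialSum {g : ℤ → E} (h : BddSeq (partialSum g)) :
    BddSums g := by
  obtain ⟨B, hB⟩ := h
  refine ⟨B + B, fun a b hab => ?_⟩
  rw [sum_Icc_eq_partialSum_sub g (by omega)]
  exact (norm_sub_le _ _).trans (add_le_add (hB b) (hB (a - 1)))

theorem BddSums.bddSeq_partialSum {g : ℤ → E} (h : BddSums g) : BddSeq (partialSum g) := by
  obtain ⟨C, hC⟩ := h
  exact bddSeq_partialSum_of_bound fun m n => hC _ _ (by omega)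

theorem bddSums_iff_bound {g : ℤ → E} :
    BddSums g ↔ ∃ C, ∀ m n : ℕ, ‖∑ k ∈ Icc (-(m : ℤ)) n, g k‖ ≤ C :=
  ⟨fun ⟨C, hC⟩ => ⟨C, fun m n => hC _ _ (by omega)⟩,
    fun ⟨_, hC⟩ => .of_bddSeq_partialSum (bddSeq_partialSum_of_bound hC)⟩

theorem BddSums.sub {g h : ℤ → E} (hg : BddSums g) (hh : BddSums h) :
    BddSums fun k => g k - h k := by
  obtain ⟨C, hC⟩ := hg
  obtain ⟨D, hD⟩ := hh
  refine ⟨C + D, fun a b hab => ?_⟩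
  rw [sum_sub_distrib]
  exact (norm_sub_le _ _).trans (add_le_add (hC a b hab) (hD a b hab))

theorem BddSeq.bddSums_sub_shift {Y : ℤ → E} (hY : BddSeq Y) :
    BddSums fun k => Y (k + 1) - Y k := by
  obtain ⟨B, hB⟩ := hY
  refine ⟨B + B, fun a b hab => ?_⟩
  rw [Int.sum_Icc_sub_telescope Y (by omega)]
  exact (norm_sub_le _ _).trans (add_le_add (hB _) (hB _))

theorem BddSeq.sum_range_shift {u : ℤ → E} (hu : BddSeq u) (p : ℕ) :
    BddSeq fun k => ∑ i ∈ range p, u (k + i) := by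
  obtain ⟨B, hB⟩ := hu
  refine ⟨p * B, fun k => (norm_sum_le _ _).trans ?_⟩
  simpa using sum_le_card_nsmul (range p) _ B fun i _ => hB (k + i)

theorem Summable.bddSums {g : ℤ → E} (h : Summable fun n => ‖g n‖) : BddSums g :=
  ⟨∑' n, ‖g n‖, fun _ _ _ =>
    (norm_sum_le _ _).trans (h.sum_le_tsum _ fun n _ => norm_nonneg (g n))⟩

end Bounded

section Ring

variable {R : Type*} [SeminormedRing R]

theorem BddSeq.const_mul {u : ℤ → R} (h : BddSeq u) (c : R) : BddSeq fun k => c * u k := by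
  obtain ⟨B, hB⟩ := h
  exact ⟨‖c‖ * B, fun k =>
    (norm_mul_le _ _).trans (mul_le_mul_of_nonneg_left (hB k) (norm_nonneg c))⟩

theorem BddSums.const_mul {g : ℤ → R} (h : BddSums g) (c : R) :
    BddSums fun k => c * g k := by
  obtain ⟨C, hC⟩ := h
  refine ⟨‖c‖ * C, fun a b hab => ?_⟩
  rw [← mul_sum]
  exact (norm_mul_le _ _).trans (mul_le_mul_of_nonneg_left (hC a b hab) (norm_nonneg c))

end Ring

theorem BddSeq.bddSums_of_shift {𝕜 : Type*} [NormedField 𝕜] {g : ℤ → 𝕜} (hg : BddSeq g)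
    {c : 𝕜} (hc : c ≠ 1) (p : ℕ) (h : BddSums fun k => g (k + p) - c * g k) : BddSums g := by
  set Y : ℤ → 𝕜 := fun k => ∑ i ∈ range p, g (k + i)
  have hY : ∀ k, Y (k + 1) - Y k = g (k + p) - g k := fun k => by
    simpa [Y, ← sum_sub_distrib, add_assoc, add_comm (1 : ℤ)] using
      sum_range_sub (fun i : ℕ => g (k + i)) p
  have key : g = fun k => (1 - c)⁻¹ * ((g (k + p) - c * g k) - (Y (k + 1) - Y k)) := by
    funext k
    rw [hY, eq_inv_mul_iff_mul_eq₀ (sub_ne_zero.mpr hc.symm)]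
    ring
  rw [key]
  exact (h.sub (hg.sum_range_shift p).bddSums_sub_shift).const_mul _

section Shift

def shift : Module.End ℂ (ℤ → ℂ) := LinearMap.funLeft ℂ ℂ (· + 1)

theorem shift_pow_apply (k : ℕ) (w : ℤ → ℂ) (n : ℤ) : (shift ^ k) w n = w (n + k) := by
  induction k generalizing w n with
  | zero => simp
  | succ k ih =>
    rw [pow_succ, Module.End.mul_apply, ih]
    simp [shift, LinearMap.funLeft_apply, add_assoc]

theorem aeval_shift_apply (P : ℂ[X]) (w : ℤ → ℂ) (n : ℤ) :
    aeval shift P w n = ∑ j ∈ range (P.natDegree + 1), P.coeff j * w (n + j) := by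
  simp [aeval_eq_sum_range, LinearMap.sum_apply, Finset.sum_apply, shift_pow_apply]

theorem aeval_shift_X_sub_C_apply (θ : ℂ) (w : ℤ → ℂ) (n : ℤ) :
    aeval shift (X - C θ) w n = w (n + 1) - θ * w n := by
  simp [shift, LinearMap.funLeft_apply]

theorem BddSeq.aeval_shift {w : ℤ → ℂ} (hw : BddSeq w) (P : ℂ[X]) : BddSeq (aeval shift P w) := by
  obtain ⟨B, hB⟩ := hw
  refine ⟨∑ j ∈ range (P.natDegree + 1), ‖P.coeff j‖ * B, fun n => ?_⟩
  rw [aeval_shift_apply]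
  refine (norm_sum_le _ _).trans (sum_le_sum fun j _ => ?_)
  rw [norm_mul]
  exact mul_le_mul_of_nonneg_left (hB _) (norm_nonneg _)

end Shift

section FirstOrder

theorem BddSeq.mul_zpow {u : ℤ → ℂ} (hu : BddSeq u) {μ : ℂ} (hμ : ‖μ‖ = 1) :
    BddSeq fun k => u k * μ ^ k := by
  obtain ⟨B, hB⟩ := hu
  exact ⟨B, fun k => by simpa [norm_zpow, hμ] using hB k⟩

variable {θ : ℂ} {v : ℤ → ℂ}

theorem exists_bddSeq_sub_mul_eq_of_norm_lt_one (hθ : ‖θ‖ < 1) (hv : BddSeq v) :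
    ∃ u, BddSeq u ∧ ∀ n, u (n + 1) - θ * u n = v n := by
  obtain ⟨B, hB⟩ := hv
  have hgeom := (hasSum_geometric_of_lt_one (norm_nonneg θ) hθ).mul_left B
  have hbound : ∀ n (j : ℕ), ‖θ ^ j * v (n - j)‖ ≤ B * ‖θ‖ ^ j := fun n j => by
    rw [norm_mul, norm_pow, mul_comm]
    exact mul_le_mul_of_nonneg_right (hB _) (by positivity)
  set S : ℤ → ℂ := fun n => ∑' j : ℕ, θ ^ j * v (n - j)
  have hS : ∀ n, S n = v n + θ * S (n - 1) := fun n => by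
    simp only [S]
    rw [(hgeom.summable.of_norm_bounded (hbound n)).tsum_eq_zero_add, ← tsum_mul_left]
    congr 1
    · simp
    · refine tsum_congr fun j => ?_
      rw [pow_succ', mul_assoc]
      congr 3
      push_cast
      ring
  refine ⟨fun n => S (n - 1), ⟨_, fun n => tsum_of_norm_bounded hgeom (hbound _)⟩, fun n => ?_⟩
  simp only [add_sub_cancel_right]
  rw [hS n]
  ring

theorem exists_bddSeq_sub_mul_eq_of_one_lt_norm (hθ : 1 < ‖θ‖) (hv : BddSeq v) :
    ∃ u, BddSeq u ∧ ∀ n, u (n + 1) - θ * u n = v n := by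
  have hθ0 : θ ≠ 0 := norm_pos_iff.mp (one_pos.trans hθ)
  obtain ⟨B, hB⟩ := hv
  -- the equation read backwards in time is one for `θ⁻¹`, which has norm `< 1`
  obtain ⟨u, ⟨C, hC⟩, hu⟩ := exists_bddSeq_sub_mul_eq_of_norm_lt_one
    (θ := θ⁻¹) (by simpa [norm_inv] using inv_lt_one_of_one_lt₀ hθ)
    (v := fun m => -θ⁻¹ * v (-m - 1)) ⟨‖θ⁻¹‖ * B, fun m => by
      simpa [norm_mul] using mul_le_mul_of_nonneg_left (hB _) (norm_nonneg θ⁻¹)⟩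
  refine ⟨fun n => u (-n), ⟨C, fun n => hC _⟩, fun n => ?_⟩
  have h := hu (-n - 1)
  rw [sub_add_cancel, show -(-n - 1) - 1 = n by ring] at h
  show u (-(n + 1)) - θ * u (-n) = v n
  rw [neg_add']
  linear_combination (-θ) * h - (u (-n - 1) - v n) * mul_inv_cancel₀ hθ0

theorem exists_bddSeq_sub_mul_eq_of_norm_eq_one (hθ : ‖θ‖ = 1)
    (hv : BddSums fun k => v k * θ⁻¹ ^ k) :
    ∃ u, BddSeq u ∧ ∀ n, u (n + 1) - θ * u n = v n := by
  have hθ0 : θ ≠ 0 := norm_ne_zero_iff.mp (by simp [hθ])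
  set G : ℤ → ℂ := fun k => θ⁻¹ * (v k * θ⁻¹ ^ k)
  obtain ⟨B, hB⟩ := (hv.const_mul θ⁻¹).bddSeq_partialSum
  refine ⟨fun n => partialSum G (n - 1) * θ ^ n,
    BddSeq.mul_zpow ⟨B, fun n => hB (n - 1)⟩ hθ, fun n => ?_⟩
  dsimp only
  rw [add_sub_cancel_right, eq_add_of_sub_eq (partialSum_sub_partialSum_sub_one G n)]
  simp only [G, inv_zpow, zpow_add_one₀ hθ0]
  field_simp
  ring

theorem BddSeq.bddSums_mul_zpow_of_sub_mul_eq {u : ℤ → ℂ} (hu : BddSeq u)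
    (heq : ∀ n, u (n + 1) - θ * u n = v n) {μ : ℂ} (hμ : ‖μ‖ = 1) (hθμ : θ * μ ≠ 1)
    (hv : BddSums fun k => v k * μ ^ k) : BddSums fun k => u k * μ ^ k := by
  refine (hu.mul_zpow hμ).bddSums_of_shift hθμ 1 ?_
  convert hv.const_mul μ using 2 with k
  have hμ0 : μ ≠ 0 := norm_ne_zero_iff.mp (by simp [hμ])
  rw [← heq, Nat.cast_one, zpow_add_one₀ hμ0]
  ring

theorem exists_bddSeq_sub_mul_eq (hv : BddSeq v)
    (hθ : ‖θ‖ = 1 → BddSums fun k => v k * θ⁻¹ ^ k) :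
    ∃ u, BddSeq u ∧ ∀ n, u (n + 1) - θ * u n = v n := by
  rcases lt_trichotomy ‖θ‖ 1 with h | h | h
  · exact exists_bddSeq_sub_mul_eq_of_norm_lt_one h hv
  · exact exists_bddSeq_sub_mul_eq_of_norm_eq_one h (hθ h)
  · exact exists_bddSeq_sub_mul_eq_of_one_lt_norm h hv

end FirstOrder

section Solve

variable {v : ℤ → ℂ}

theorem exists_bddSeq_aeval_shift_prod_eq {s : Multiset ℂ} (hs : s.Nodup) (hv : BddSeq v)
    (hsums : ∀ θ ∈ s, ‖θ‖ = 1 → BddSums fun k => v k * θ⁻¹ ^ k) :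
    ∃ w, BddSeq w ∧ aeval shift (s.map fun θ => X - C θ).prod w = v := by
  induction s using Multiset.induction_on generalizing v with
  | empty => exact ⟨v, hv, by simp⟩
  | cons θ s ih =>
    obtain ⟨hθs, hs⟩ := Multiset.nodup_cons.mp hs
    obtain ⟨u, hu, hθ⟩ := exists_bddSeq_sub_mul_eq hv (hsums θ (Multiset.mem_cons_self θ s))
    obtain ⟨w, hw, rfl⟩ := ih hs hu fun μ hμs hμ => by
      have hμ0 : μ ≠ 0 := norm_ne_zero_iff.mp (by simp [hμ])
      refine hu.bddSums_mul_zpow_of_sub_mul_eq hθ (by simp [hμ]) ?_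
        (hsums μ (Multiset.mem_cons_of_mem hμs) hμ)
      rw [Ne, mul_inv_eq_one₀ hμ0]
      rintro rfl
      exact hθs hμs
    refine ⟨w, hw, funext fun n => ?_⟩
    rw [Multiset.map_cons, Multiset.prod_cons, map_mul, Module.End.mul_apply,
      aeval_shift_X_sub_C_apply, hθ]

theorem exists_bddSeq_aeval_shift_eq {P : ℂ[X]} (hP : P ≠ 0) (hs : P.roots.Nodup)
    (hv : BddSeq v) (hsums : ∀ θ ∈ P.roots, ‖θ‖ = 1 → BddSums fun k => v k * θ⁻¹ ^ k) :
    ∃ w, BddSeq w ∧ aeval shift P w = v := by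
  set c := P.leadingCoeff
  have hc : c ≠ 0 := leadingCoeff_ne_zero.mpr hP
  obtain ⟨w, hw, hPw⟩ := exists_bddSeq_aeval_shift_prod_eq hs (hv.const_mul c⁻¹)
    fun θ hθ h1 => by simpa only [mul_assoc] using (hsums θ hθ h1).const_mul c⁻¹
  refine ⟨w, hw, ?_⟩
  rw [← C_leadingCoeff_mul_prod_multiset_X_sub_C (p := P) IsAlgClosed.card_roots_eq_natDegree,
    map_mul, Module.End.mul_apply, hPw, aeval_C]
  funext n
  exact mul_inv_cancel_left₀ hc (v n)

end Solve

section IntegerPolynomial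

theorem isUnit_of_isUnit_toLaurent {R : Type*} [CommRing R] [IsDomain R] {g : R[X]}
    (hg : g.coeff 0 ≠ 0) (h : IsUnit (toLaurent g)) : IsUnit g := by
  obtain ⟨u, hu⟩ := h
  obtain ⟨n, g', hg'⟩ := LaurentPolynomial.exists_T_pow (↑u⁻¹ : LaurentPolynomial R)
  have hdvd : g ∣ X ^ n := ⟨g', toLaurent_injective <| by
    rw [map_mul, hg', ← hu, ← mul_assoc, Units.mul_inv, one_mul, toLaurent_X_pow]⟩
  obtain ⟨i, -, hi⟩ := (dvd_prime_pow prime_X n).mp hdvd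
  rcases i with _ | i
  · exact hi.isUnit_iff.mpr (by rw [pow_zero]; exact isUnit_one)
  · exact absurd (X_dvd_iff.mp ((dvd_pow_self X i.succ_ne_zero).trans hi.symm.dvd)) hg

theorem irreducible_of_irreducible_toLaurent {R : Type*} [CommRing R] [IsDomain R] {f : R[X]}
    (h0 : f.coeff 0 ≠ 0) (hf : Irreducible (toLaurent f)) : Irreducible f := by
  refine ⟨fun hu => hf.not_isUnit (hu.map _), fun g h hgh => ?_⟩
  rw [hgh, mul_coeff_zero] at h0
  exact (hf.isUnit_or_isUnit (by rw [hgh, map_mul])).imp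
    (isUnit_of_isUnit_toLaurent (left_ne_zero_of_mul h0))
    (isUnit_of_isUnit_toLaurent (right_ne_zero_of_mul h0))

theorem nodup_roots_map_of_irreducible {K : Type*} [Field K] [CharZero K] {f : ℤ[X]}
    (hf : Irreducible f) : (f.map (Int.castRingHom K)).roots.Nodup := by
  by_cases hdeg : f.natDegree = 0
  · rw [eq_C_of_natDegree_eq_zero hdeg, Polynomial.map_C, roots_C]
    exact Multiset.nodup_zero
  have hQ : Irreducible (f.map (Int.castRingHom ℚ)) :=
    (IsPrimitive.Int.irreducible_iff_irreducible_map_cast (hf.isPrimitive hdeg)).mp hf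
  have hsep := hQ.separable.map (f := algebraMap ℚ K)
  rw [Polynomial.map_map, show (algebraMap ℚ K).comp (Int.castRingHom ℚ) = Int.castRingHom K
    from RingHom.ext_int _ _] at hsep
  exact nodup_roots hsep

theorem aeval_inv_eq_zero_of_norm_eq_one {f : ℤ[X]} {θ : ℂ} (hθ : aeval θ f = 0)
    (h1 : ‖θ‖ = 1) : aeval θ⁻¹ f = 0 := by
  simpa [Complex.inv_eq_conj h1, hθ] using
    aeval_algHom_apply (Complex.conjAe.restrictScalars ℤ) θ f

end IntegerPolynomial

section Vf

variable {f : ℤ[X]}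

theorem fsR_eq_aeval_shift (f : ℤ[X]) (w : ℤ → ℝ) (n : ℤ) :
    (fsR f w n : ℂ) = aeval shift (f.map (Int.castRingHom ℂ)) (fun k => (w k : ℂ)) n := by
  simp [aeval_shift_apply, natDegree_map_eq_of_injective (Int.castRingHom ℂ).injective_int, fsR]

theorem BddZ.bddSeq_cast {v : ℤ → ℤ} (hv : BddZ v) : BddSeq fun k => (v k : ℂ) := by
  obtain ⟨B, hB⟩ := hv
  exact ⟨B, fun k => by rw [Complex.norm_intCast]; exact_mod_cast hB k⟩

theorem bddZ_of_summable {v : ℤ → ℤ} (h : Summable fun n => |(v n : ℝ)|) : BddZ v :=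
  ⟨⌈∑' n, |(v n : ℝ)|⌉, fun n => by
    have := (h.le_tsum n fun k _ => abs_nonneg _).trans (Int.le_ceil _)
    exact_mod_cast this⟩

theorem InVf.bddSums_mul_zpow {v : ℤ → ℤ} (hv : InVf f v) {θ : ℂ} (hθ : aeval θ f = 0)
    (h1 : ‖θ‖ = 1) : BddSums fun k => (v k : ℂ) * θ ^ k := by
  obtain ⟨w, ⟨B, hB⟩, hw⟩ := hv
  have hθ0 : θ ≠ 0 := norm_ne_zero_iff.mp (by simp [h1])
  set F := f.map (Int.castRingHom ℂ)
  have hroot : F.IsRoot θ⁻¹ := by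
    simpa [F, aeval_def, eval₂_eq_eval_map] using aeval_inv_eq_zero_of_norm_eq_one hθ h1
  set y := aeval shift (F /ₘ (X - C θ⁻¹)) (fun k => (w k : ℂ))
  have hy : BddSeq y := BddSeq.aeval_shift ⟨B, fun k => by simpa using hB k⟩ _
  have hvy : ∀ k, (v k : ℂ) = y (k + 1) - θ⁻¹ * y k := fun k => by
    rw [← aeval_shift_X_sub_C_apply, ← Module.End.mul_apply, ← map_mul,
      mul_divByMonic_eq_iff_isRoot.mpr hroot, ← fsR_eq_aeval_shift, hw k]
    norm_cast
  convert (hy.mul_zpow h1).bddSums_sub_shift.const_mul θ⁻¹ using 2 with k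
  rw [hvy, zpow_add_one₀ hθ0]
  field_simp

theorem inVf_of_bddSums (h0 : f.coeff 0 ≠ 0) (hirr : Irreducible (toLaurent f)) {v : ℤ → ℤ}
    (hv : BddZ v) (H : ∀ θ : ℂ, aeval θ f = 0 → ‖θ‖ = 1 → BddSums fun k => (v k : ℂ) * θ ^ k) :
    InVf f v := by
  set F := f.map (Int.castRingHom ℂ)
  have hF : F ≠ 0 := (Polynomial.map_ne_zero_iff Int.cast_injective).mpr (by rintro rfl; simp at h0)
  obtain ⟨w, ⟨B, hB⟩, hFw⟩ := exists_bddSeq_aeval_shift_eq hF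
    (nodup_roots_map_of_irreducible (irreducible_of_irreducible_toLaurent h0 hirr))
    hv.bddSeq_cast fun θ hθ h1 => by
      have hθf : aeval θ f = 0 := by simpa [aeval_def, eval₂_eq_eval_map] using (mem_roots hF).mp hθ
      simpa using H θ⁻¹ (aeval_inv_eq_zero_of_norm_eq_one hθf h1) (by simp [h1])
  refine ⟨fun k => (w k).re, ⟨B, fun k => (Complex.abs_re_le_norm _).trans (hB k)⟩, fun n => ?_⟩
  have h := congrArg Complex.re (congrFun hFw n)
  rw [aeval_shift_apply] at h
  simpa [fsR, Complex.re_sum, F,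
    natDegree_map_eq_of_injective (Int.castRingHom ℂ).injective_int] using h

theorem bddSums_mul_zpow_of_periodic {v : ℤ → ℂ} (hv : BddSeq v) {p : ℕ}
    (hper : ∀ n, v (n + p) = v n) {θ : ℂ} (h1 : ‖θ‖ = 1) (hθp : θ ^ p ≠ 1) :
    BddSums fun k => v k * θ ^ k := by
  have hθ0 : θ ≠ 0 := norm_ne_zero_iff.mp (by simp [h1])
  refine (hv.mul_zpow h1).bddSums_of_shift hθp p ⟨0, fun a b _ => ?_⟩
  rw [sum_eq_zero fun k _ => ?_, norm_zero]
  rw [hper, zpow_add₀ hθ0, zpow_natCast]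
  ring

end Vf

theorem Vf_bounded_partial_sums_general (f : Polynomial ℤ) (h0 : f.coeff 0 ≠ 0)
    (hirr : Irreducible (Polynomial.toLaurent f)) (hnc : Noncyclotomic f) :
    (∀ v : ℤ → ℤ, BddZ v →
      (InVf f v ↔ ∀ θ : ℂ, Polynomial.aeval θ f = 0 → ‖θ‖ = 1 →
        ∃ C : ℝ, ∀ m n : ℕ,
          ‖∑ k ∈ Finset.Icc (-(m : ℤ)) (n : ℤ), (v k : ℂ) * θ ^ k‖ ≤ C)) ∧
    (∀ v : ℤ → ℤ, (Summable fun n : ℤ => |(v n : ℝ)|) → InVf f v) ∧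
    (∀ v : ℤ → ℤ, BddZ v → (∃ p : ℕ, 0 < p ∧ ∀ n : ℤ, v (n + (p : ℤ)) = v n) →
      InVf f v) := by
  refine ⟨fun v hv => ?_, fun v hv => ?_, ?_⟩
  · refine ⟨fun h θ hθ h1 => bddSums_iff_bound.mp (h.bddSums_mul_zpow hθ h1),
      fun H => inVf_of_bddSums h0 hirr hv fun θ hθ h1 => bddSums_iff_bound.mpr (H θ hθ h1)⟩
  · exact inVf_of_bddSums h0 hirr (bddZ_of_summable hv) fun θ _ h1 =>
      Summable.bddSums (by simpa [h1] using hv)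
  · rintro v hv ⟨p, hp, hper⟩
    exact inVf_of_bddSums h0 hirr hv fun θ hθ h1 =>
      bddSums_mul_zpow_of_periodic hv.bddSeq_cast (fun n => by exact_mod_cast hper n) h1
        (hnc θ hθ p hp)

/-- `v ∈ ℓ^∞(ℤ,ℤ)` lies in `V_f` iff all partial sums
`∑_{k=-m}^{n} v_k θ^k` are uniformly bounded, for each root `θ` of `f` with `|θ| = 1`.
In particular `V_f ⊇ ℓ^1(ℤ,ℤ)` and `V_f` contains every periodic bounded integer
sequence. -/
theorem Vf_bounded_partial_sums (f : Polynomial ℤ) (hm : 1 ≤ f.natDegree)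
    (hlead : 0 < f.leadingCoeff) (h0 : f.coeff 0 ≠ 0)
    (hirr : Irreducible (Polynomial.toLaurent f)) (hnc : Noncyclotomic f) :
    (∀ v : ℤ → ℤ, BddZ v →
      (InVf f v ↔ ∀ θ : ℂ, Polynomial.aeval θ f = 0 → ‖θ‖ = 1 →
        ∃ C : ℝ, ∀ m n : ℕ,
          ‖∑ k ∈ Finset.Icc (-(m : ℤ)) (n : ℤ), (v k : ℂ) * θ ^ k‖ ≤ C)) ∧
    (∀ v : ℤ → ℤ, (Summable fun n : ℤ => |(v n : ℝ)|) → InVf f v) ∧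
    (∀ v : ℤ → ℤ, BddZ v → (∃ p : ℕ, 0 < p ∧ ∀ n : ℤ, v (n + (p : ℤ)) = v n) →
      InVf f v) :=
  Vf_bounded_partial_sums_general f h0 hirr hnc

end
end

section
/- Let V be a finite-dimensional real vector space and let k > dim V be a positive integer. Let φ₁, …, φ_k be affine functions V → ℝ and b₁, …, b_k ∈ ℝ. Then there exist a₁, …, a_k ∈ {0,1} such that ⋂_{j=1}^k W_j(a_j) = ∅, where W_j(1) = {v ∈ V : φ_j(v) < b_j} and W_j(0) = {v ∈ V : φ_j(v) ≥ b_j}. -/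
/-!
Since `k > dim V = dim V*`, the linear parts `ℓ_j` of the `φ_j` satisfy a nontrivial relation
`∑ t_j ℓ_j = 0`, so `∑ t_j (φ_j - b_j)` is a constant `s`. Replacing `t` by `-t` we may assume
`s < 0`, or `s = 0` and some `t_i < 0`. Choosing `W_j(1)` exactly when `t_j < 0` makes every term
`t_j (φ_j v - b_j)` nonnegative on the intersection, and positive when `t_j < 0`, so the
intersection cannot contain any `v`.
-/

open Finset Module

section

variable {ι : Type*} [Fintype ι]

theorem exists_sum_smul_eq_zero_of_finrank_lt_card {K W : Type*} [Field K] [AddCommGroup W]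
    [Module K W] [FiniteDimensional K W] (f : ι → W) (h : finrank K W < Fintype.card ι) :
    ∃ t : ι → K, ∑ i, t i • f i = 0 ∧ ∃ i, t i ≠ 0 :=
  Fintype.not_linearIndependent_iff.mp fun hf => h.not_ge hf.fintype_card_le_finrank

theorem sum_mul_add_sub_eq_of_sum_smul_eq_zero {R V : Type*} [CommRing R] [AddCommGroup V]
    [Module R V] {l : ι → Dual R V} {t : ι → R} (ht : ∑ i, t i • l i = 0) (c b : ι → R) (v : V) :
    ∑ i, t i * (l i v + c i - b i) = ∑ i, t i * (c i - b i) := by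
  have hv : ∑ i, t i * l i v = 0 := by
    simpa only [LinearMap.sum_apply, LinearMap.smul_apply, smul_eq_mul, LinearMap.zero_apply]
      using congrArg (· v) ht
  simp only [add_sub_assoc, mul_add, sum_add_distrib, hv, zero_add]

section Halfspaces

variable {V : Type*} {φ : ι → V → ℝ} {b t : ι → ℝ} {s : ℝ}

theorem exists_iInter_halfspaces_eq_empty_of_nonpos
    (hs : ∀ v, ∑ i, t i * (φ i v - b i) = s) (h : s < 0 ∨ s ≤ 0 ∧ ∃ i, t i < 0) :
    ∃ a : ι → Bool,
      (⋂ i, (if a i then {v : V | φ i v < b i} else {v : V | b i ≤ φ i v})) = ∅ := by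
  refine ⟨fun i => decide (t i < 0), Set.eq_empty_of_forall_notMem fun v hv => ?_⟩
  have hterm : ∀ i, 0 ≤ t i * (φ i v - b i) ∧ (t i < 0 → 0 < t i * (φ i v - b i)) := by
    intro i
    have hvi := Set.mem_iInter.mp hv i
    by_cases hti : t i < 0
    · simp only [hti, decide_true, if_true, Set.mem_ofPred_eq] at hvi
      have hpos := mul_pos_of_neg_of_neg hti (sub_neg.mpr hvi)
      exact ⟨hpos.le, fun _ => hpos⟩
    · simp only [hti, decide_false, Bool.false_eq_true, if_false, Set.mem_ofPred_eq] at hvi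
      exact ⟨mul_nonneg (not_lt.mp hti) (sub_nonneg.mpr hvi), fun h => absurd h hti⟩
  rcases h with hneg | ⟨hnonpos, i, hi⟩
  · have : 0 ≤ s := hs v ▸ sum_nonneg fun i _ => (hterm i).1
    linarith
  · have : 0 < s := hs v ▸ sum_pos' (fun i _ => (hterm i).1) ⟨i, mem_univ i, (hterm i).2 hi⟩
    linarith

theorem exists_iInter_halfspaces_eq_empty_of_sum_mul_sub_eq
    (hs : ∀ v, ∑ i, t i * (φ i v - b i) = s) (ht : ∃ i, t i ≠ 0) :
    ∃ a : ι → Bool,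
      (⋂ i, (if a i then {v : V | φ i v < b i} else {v : V | b i ≤ φ i v})) = ∅ := by
  have hs' : ∀ v, ∑ i, (-t) i * (φ i v - b i) = -s := fun v => by
    simp only [Pi.neg_apply, neg_mul, sum_neg_distrib, hs v]
  rcases lt_trichotomy s 0 with hs0 | hs0 | hs0
  · exact exists_iInter_halfspaces_eq_empty_of_nonpos hs (Or.inl hs0)
  · obtain ⟨i, hi⟩ := ht
    rcases hi.lt_or_gt with hneg | hpos
    · exact exists_iInter_halfspaces_eq_empty_of_nonpos hs (Or.inr ⟨hs0.le, i, hneg⟩)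
    · exact exists_iInter_halfspaces_eq_empty_of_nonpos hs'
        (Or.inr ⟨by rw [hs0, neg_zero], i, neg_neg_of_pos hpos⟩)
  · exact exists_iInter_halfspaces_eq_empty_of_nonpos hs' (Or.inl (neg_neg_of_pos hs0))

end Halfspaces

end

/-- Hanfeng Li's lemma: if `V` is a finite-dimensional real vector space,
`k > dim V`, `φ₁, …, φ_k` are affine functions on `V` and `b₁, …, b_k ∈ ℝ`, then there are
signs `a₁, …, a_k ∈ {0,1}` such that `⋂_j W_j(a_j) = ∅`, where `W_j(1) = {φ_j < b_j}` and
`W_j(0) = {φ_j ≥ b_j}`. -/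
theorem affine_halfspaces_empty_intersection
    (V : Type*) [AddCommGroup V] [Module ℝ V] [FiniteDimensional ℝ V]
    (k : ℕ) (hk : Module.finrank ℝ V < k)
    (φ : Fin k → V → ℝ)
    (hφ : ∀ j, ∃ (l : V →ₗ[ℝ] ℝ) (c : ℝ), φ j = fun v => l v + c)
    (b : Fin k → ℝ) :
    ∃ a : Fin k → Bool,
      (⋂ j : Fin k,
        (if a j then {v : V | φ j v < b j} else {v : V | b j ≤ φ j v})) = ∅ := by
  choose l c hlc using hφ
  obtain ⟨t, hrel, ht⟩ := exists_sum_smul_eq_zero_of_finrank_lt_card (K := ℝ) l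
    (by rwa [Subspace.dual_finrank_eq, Fintype.card_fin])
  refine exists_iInter_halfspaces_eq_empty_of_sum_mul_sub_eq
    (s := ∑ j, t j * (c j - b j)) (fun v => ?_) ht
  simpa only [hlc] using sum_mul_add_sub_eq_of_sum_smul_eq_zero hrel c b v
end
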